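/- Let F be a field of characteristic 2, let i ≥ 0, and let w_0, …, w_i ∈ F be such that w_0, …, w_{i−1} are linearly independent over the prime field F_2. Define polynomials f_j ∈ F[X] recursively by f_0 = X and f_{j+1} = f_j² + f_j(w_j) · f_j. Then f_i(w_i) = 0 if and only if w_i lies in the F_2-span of {w_0, …, w_{i−1}}; in particular the recursion detects linear dependence of a new root on the previous roots at no extra computational cost. -/

import Mathlib

/-!
In characteristic 2 squaring is additive, so every `fseq w j` is an additive polynomial, and
`f_{j+1}(a) = f_j(a) (f_j(a) + f_j(w_j)) = f_j(a) f_j(a + w_j)`.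
Hence the zero set of `f_{j+1}` is `Z_j ∪ (w_j + Z_j)`, and by induction the zero set of `f_j`
is exactly the set of subset sums of `w_0, …, w_{j-1}`.
-/

/-- The recursively defined linearized polynomials: `f 0 = X` and
`f (j+1) = (f j)^2 + f j (w j) • f j`. -/
noncomputable def fseq {F : Type*} [CommRing F] (w : ℕ → F) : ℕ → Polynomial F
  | 0 => Polynomial.X
  | j + 1 => fseq w j ^ 2 + Polynomial.C ((fseq w j).eval (w j)) * fseq w j

open Polynomial

namespace fseq

variable {F : Type*} [CommRing F] [CharP F 2] (w : ℕ → F)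

theorem eval_add (j : ℕ) (a b : F) :
    (fseq w j).eval (a + b) = (fseq w j).eval a + (fseq w j).eval b := by
  induction j with
  | zero => simp [fseq]
  | succ j ih =>
    simp only [fseq, Polynomial.eval_add, eval_pow, eval_mul, eval_C, ih, CharTwo.add_sq]
    ring

theorem eval_zero (j : ℕ) : (fseq w j).eval 0 = 0 := by
  simpa using eval_add w j 0 0

theorem eval_succ (j : ℕ) (a : F) :
    (fseq w (j + 1)).eval a = (fseq w j).eval a * (fseq w j).eval (a + w j) := by
  simp only [fseq, Polynomial.eval_add, eval_pow, eval_mul, eval_C, eval_add w j]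
  ring

theorem eval_eq_zero_of_lt {k j : ℕ} (h : k < j) : (fseq w j).eval (w k) = 0 := by
  induction j with
  | zero => omega
  | succ j ih =>
    rw [eval_succ]
    rcases Nat.lt_succ_iff_lt_or_eq.mp h with hk | rfl
    · rw [ih hk, zero_mul]
    · rw [CharTwo.add_self_eq_zero, eval_zero, mul_zero]

theorem eval_sum_eq_zero (j : ℕ) (S : Finset (Fin j)) :
    (fseq w j).eval (∑ k ∈ S, w k) = 0 := by
  have hsum := map_sum (AddMonoidHom.mk' (fun a => (fseq w j).eval a) (eval_add w j))
    (fun k : Fin j => w k) S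
  simp only [AddMonoidHom.mk'_apply] at hsum
  rw [hsum]
  exact Finset.sum_eq_zero fun k _ => eval_eq_zero_of_lt w k.isLt

theorem exists_eq_sum_of_eval_eq_zero [NoZeroDivisors F] {j : ℕ} {a : F}
    (h : (fseq w j).eval a = 0) : ∃ S : Finset (Fin j), a = ∑ k ∈ S, w k := by
  induction j generalizing a with
  | zero => exact ⟨∅, by simpa [fseq] using h⟩
  | succ j ih =>
    rw [eval_succ, mul_eq_zero] at h
    rcases h with h | h
    · obtain ⟨S, hS⟩ := ih h
      exact ⟨S.map Fin.castSuccEmb, by simpa using hS⟩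
    · obtain ⟨S, hS⟩ := ih h
      have hlast : Fin.last j ∉ S.map Fin.castSuccEmb := by simp [Fin.castSucc_ne_last]
      refine ⟨.cons (Fin.last j) (S.map Fin.castSuccEmb) hlast, ?_⟩
      rw [Finset.sum_cons, Finset.sum_map, add_comm, ← CharTwo.add_eq_iff_eq_add]
      simpa using hS

theorem eval_eq_zero_iff [NoZeroDivisors F] (j : ℕ) (a : F) :
    (fseq w j).eval a = 0 ↔ ∃ S : Finset (Fin j), a = ∑ k ∈ S, w k :=
  ⟨exists_eq_sum_of_eval_eq_zero w, fun ⟨S, hS⟩ => hS ▸ eval_sum_eq_zero w j S⟩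

end fseq

theorem stmt12_general {F : Type*} [Field F] [CharP F 2] (i : ℕ) (w : ℕ → F) :
    (fseq w i).eval (w i) = 0 ↔ ∃ S : Finset (Fin i), w i = ∑ j ∈ S, w (j : ℕ) :=
  fseq.eval_eq_zero_iff w i (w i)

theorem stmt12 {F : Type*} [Field F] [CharP F 2] (i : ℕ) (w : ℕ → F)
    (hw : ∀ S : Finset (Fin i), S.Nonempty → ∑ j ∈ S, w (j : ℕ) ≠ 0) :
    (fseq w i).eval (w i) = 0 ↔ ∃ S : Finset (Fin i), w i = ∑ j ∈ S, w (j : ℕ) :=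
  stmt12_general i w
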